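/- Let Σ be a finite connected simple graph that is regular of valency 4, let G ≤ Aut(Σ) be arc-transitive on Σ, and let (ω, ω') be an ordered pair of adjacent vertices with vertex stabilizer G_ω a (finite) 2-group with |G_ω| ≥ 16. Let g ∈ G satisfy g·ω = ω', g·ω' = ω and g² ∈ G_ω^{[1]}, and let x ∈ G_ω \ G_{ωω'} and y ∈ G_{ω'}^{[1]} \ G_ω^{[1]} satisfy G_ω = ⟨G_ω^{[1]}, x, y⟩, G_ω^{[1]} = ⟨G_ω^{[1]} ∩ G_{ω'}^{[1]}, g⁻¹yg⟩, and (xy)² ∈ G_ω^{[1]} (such g, x, y exist by Lemma 6.3). Set L = ⟨G_ω^{[1]}, xy⟩. Then: (i) ⟨L, g⟩ = G; (ii) L ∩ g⁻¹Lg = G_ω^{[1]} ∩ G_{ω'}^{[1]} and |L : L ∩ g⁻¹Lg| = 4; (iii) L·G_{ωω'} ≠ G_ω (equivalently, L is intransitive on Σ(ω)). Consequently the coset graph Cos(G, L, LgL) is a connected tetravalent G-symmetric pseudocover of Σ. -/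

import Mathlib

/-!
Write `K = G_ω^{[1]}` and `N = G_ω^{[1]} ∩ G_{ω'}^{[1]}`. An element `t` fixing `ω` normalises `K`,
so if moreover `t² ∈ K` and `t ∉ K` then `⟨K, t⟩ = K ∪ Kt` contains `K` with index `2`. This gives
`|L : K| = 2` for `t = xy`, and `|K : N| = 2` for `t = g⁻¹yg`: here `(g⁻¹yg)² ∈ N` because the
`2`-element `y ∈ G_{ω'}^{[1]}` permutes the three other neighbours of `ω` in orbits of length at
most `2`. Every element of `K·xy` sends `ω'` to `xω' ≠ ω'`, so `L` moves `ω'` only to `xω'` (hence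
is intransitive on `Σ(ω)`), and the elements of `L` fixing `ω'` lie in `K`; since `L ∩ L^g` fixes
both `ω` and `ω' = gω`, this yields `L ∩ L^g = N` and `|L : L ∩ L^g| = 4`. The group `⟨L, g⟩`
contains `G_ω` and an element carrying `ω` to a neighbour, so by arc-transitivity and connectedness
it is transitive on vertices and equals `G`. In `Cos(G, L, LgL)` the neighbours of `zL` are the
cosets `zhgL` (`h ∈ L`), in bijection with `L / (L ∩ L^g)`, and `⟨L, g⟩ = G` makes it connected.
-/

open scoped Pointwise

/-- The pointwise stabilizer `G_ω^{[1]}` of the neighbourhood of `ω` within the vertex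
stabilizer `G_ω`: the subgroup of elements fixing `ω` and all of its neighbours. -/
def pstab {V : Type*} (Sg : SimpleGraph V) (G : Type*) [Group G] [MulAction G V] (ω : V) :
    Subgroup G :=
  MulAction.stabilizer G ω ⊓ ⨅ v ∈ Sg.neighborSet ω, MulAction.stabilizer G v

/-- The conjugate subgroup `H^g = g⁻¹ H g`. -/
def conjSG {G : Type*} [Group G] (H : Subgroup G) (g : G) : Subgroup G :=
  Subgroup.comap (MulAut.conj g).toMonoidHom H

/-- membership of the double coset `H g H`. -/
def inDC {G : Type*} [Group G] (H : Subgroup G) (g z : G) : Prop :=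
  ∃ h ∈ H, ∃ h' ∈ H, z = h * g * h'

/-- The coset graph `Cos(G,H,HgH)` on the coset space `G/H`: distinct cosets `xH` and `yH`
are adjacent iff `x⁻¹y ∈ HgH`.  (The symmetrised form of the adjacency relation below is
equal to this condition whenever `g² ∈ H`, since then `(HgH)⁻¹ = HgH`.) -/
def cosetGraph {G : Type*} [Group G] (H : Subgroup G) (g : G) : SimpleGraph (G ⧸ H) where
  Adj a b := a ≠ b ∧ ∃ x y : G, (x : G ⧸ H) = a ∧ (y : G ⧸ H) = b ∧
      (inDC H g (x⁻¹ * y) ∨ inDC H g (y⁻¹ * x))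
  symm := by
    constructor
    rintro a b ⟨hne, x, y, hx, hy, h⟩
    exact ⟨hne.symm, y, x, hy, hx, h.symm⟩
  loopless := by
    constructor
    rintro a ⟨hne, -⟩
    exact hne rfl

section SubgroupClosure

variable {G : Type*} [Group G] {K : Subgroup G} {t : G}

theorem mem_closure_union_singleton_iff (hN : t ∈ Subgroup.normalizer (K : Set G))
    (ht2 : t ^ 2 ∈ K) {z : G} :
    z ∈ Subgroup.closure ((K : Set G) ∪ {t}) ↔ z ∈ K ∨ ∃ k ∈ K, z = k * t := by
  have conj : ∀ k ∈ K, t * k * t⁻¹ ∈ K := fun k => (Subgroup.mem_normalizer_iff.mp hN k).mp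
  refine ⟨fun hz => ?_, ?_⟩
  · induction hz using Subgroup.closure_induction with
    | mem a ha =>
      rcases ha with ha | rfl
      · exact .inl ha
      · exact .inr ⟨1, K.one_mem, (one_mul _).symm⟩
    | one => exact .inl K.one_mem
    | mul a b _ _ ha hb =>
      rcases ha with ha | ⟨k, hk, rfl⟩ <;> rcases hb with hb | ⟨k', hk', rfl⟩
      · exact .inl (mul_mem ha hb)
      · exact .inr ⟨a * k', mul_mem ha hk', (mul_assoc _ _ _).symm⟩
      · exact .inr ⟨k * (t * b * t⁻¹), mul_mem hk (conj b hb), by group⟩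
      · refine .inl ?_
        rw [show k * t * (k' * t) = k * (t * k' * t⁻¹) * t ^ 2 by group]
        exact mul_mem (mul_mem hk (conj k' hk')) ht2
    | inv a _ ha =>
      rcases ha with ha | ⟨k, hk, rfl⟩
      · exact .inl (inv_mem ha)
      · exact .inr ⟨(t ^ 2)⁻¹ * (t * k⁻¹ * t⁻¹), mul_mem (inv_mem ht2) (conj _ (inv_mem hk)),
          by group⟩
  · rintro (hz | ⟨k, hk, rfl⟩)
    · exact Subgroup.subset_closure (.inl hz)
    · exact mul_mem (Subgroup.subset_closure (.inl hk)) (Subgroup.subset_closure (.inr rfl))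

theorem le_closure_union_singleton : K ≤ Subgroup.closure ((K : Set G) ∪ {t}) :=
  fun _ hk => Subgroup.subset_closure (.inl hk)

theorem relIndex_closure_union_singleton_eq_two (hN : t ∈ Subgroup.normalizer (K : Set G))
    (ht2 : t ^ 2 ∈ K) (ht : t ∉ K) :
    K.relIndex (Subgroup.closure ((K : Set G) ∪ {t})) = 2 := by
  rw [Subgroup.relIndex, Subgroup.index_eq_two_iff]
  refine ⟨⟨t, Subgroup.subset_closure (.inr rfl)⟩, fun ⟨b, hb⟩ => ?_⟩
  simp only [Subgroup.mem_subgroupOf, Subgroup.coe_mul]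
  rcases (mem_closure_union_singleton_iff hN ht2).mp hb with hb | ⟨k, hk, rfl⟩
  · simp [K.mul_mem_cancel_left hb, hb, ht]
  · rw [mul_assoc, ← sq]
    simp [K.mul_mem_cancel_left hk, ht2, ht]

end SubgroupClosure

theorem pow_smul_eq_of_forall_pow_smul_mem {G V : Type*} [Group G] [MulAction G V] {p k : ℕ}
    (hp : p.Prime) {y : G} (hy : y ^ p ^ k = 1) {u : V} {S : Set V} (hS : S.Finite)
    (hcard : S.ncard < p ^ 2) (hmem : ∀ n : ℕ, y ^ n • u ∈ S) : y ^ p • u = u := by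
  obtain ⟨j, -, hj⟩ := (Nat.dvd_prime_pow hp).mp
    (MulAction.pow_smul_eq_iff_minimalPeriod_dvd.mp (by rw [hy, one_smul] : y ^ p ^ k • u = u))
  have hinj : (Set.Iio (Function.minimalPeriod (y • ·) u)).InjOn fun i => y ^ i • u := by
    simpa only [smul_iterate] using
      Function.iterate_injOn_Iio_minimalPeriod (f := (y • ·)) (x := u)
  have hle := Set.ncard_le_ncard_of_injOn _ (fun i _ => hmem i) hinj hS
  rw [Set.ncard_Iio_nat, hj] at hle
  have hj1 : j ≤ 1 := by
    have := (Nat.pow_lt_pow_iff_right hp.one_lt).mp (hle.trans_lt hcard)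
    omega
  exact MulAction.pow_smul_eq_iff_minimalPeriod_dvd.mpr
    (hj ▸ (pow_dvd_pow p hj1).trans (pow_one p).dvd)

section PointwiseStabilizer

variable {V G : Type*} [Group G] [MulAction G V] {Sg : SimpleGraph V}

theorem mem_pstab_iff {z : G} {v : V} :
    z ∈ pstab Sg G v ↔ z • v = v ∧ ∀ u, Sg.Adj v u → z • u = u := by
  simp [pstab, Subgroup.mem_iInf, MulAction.mem_stabilizer_iff, SimpleGraph.mem_neighborSet]

theorem pstab_le_stabilizer (v : V) : pstab Sg G v ≤ MulAction.stabilizer G v :=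
  inf_le_left

theorem conj_mem_pstab_smul_iff
    (hact : ∀ (g : G) (a b : V), Sg.Adj (g • a) (g • b) ↔ Sg.Adj a b)
    (a z : G) (v : V) : a * z * a⁻¹ ∈ pstab Sg G (a • v) ↔ z ∈ pstab Sg G v := by
  have key : ∀ w : V, (a * z * a⁻¹) • a • w = a • w ↔ z • w = w := fun w => by
    rw [mul_smul, mul_smul, inv_smul_smul, smul_left_cancel_iff]
  rw [mem_pstab_iff, mem_pstab_iff, key]
  refine and_congr_right' ⟨fun h u hu => (key u).mp (h _ ((hact a v u).mpr hu)), fun h u hu => ?_⟩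
  rw [← smul_inv_smul a u] at hu ⊢
  exact (key _).mpr (h _ ((hact a v _).mp hu))

theorem mem_normalizer_pstab
    (hact : ∀ (g : G) (a b : V), Sg.Adj (g • a) (g • b) ↔ Sg.Adj a b)
    {a : G} {v : V} (ha : a • v = v) : a ∈ Subgroup.normalizer (pstab Sg G v : Set G) := by
  refine Subgroup.mem_normalizer_iff.mpr fun z => ?_
  have := conj_mem_pstab_smul_iff hact a z v
  rw [ha] at this
  exact this.symm

theorem sq_mem_pstab_of_mem_pstab_adj
    (hact : ∀ (g : G) (a b : V), Sg.Adj (g • a) (g • b) ↔ Sg.Adj a b) {ω ω' : V}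
    (hval : (Sg.neighborSet ω).ncard = 4) (hadj : Sg.Adj ω ω') {y : G} (hy : y ∈ pstab Sg G ω')
    {k : ℕ} (hk : y ^ 2 ^ k = 1) : y ^ 2 ∈ pstab Sg G ω := by
  have hyω' : y ∈ MulAction.stabilizer G ω' := (mem_pstab_iff.mp hy).1
  have hyω : y ∈ MulAction.stabilizer G ω := (mem_pstab_iff.mp hy).2 ω hadj.symm
  refine mem_pstab_iff.mpr ⟨pow_mem hyω 2, fun u hu => ?_⟩
  obtain rfl | huω' := eq_or_ne u ω'
  · exact pow_mem hyω' 2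
  refine pow_smul_eq_of_forall_pow_smul_mem Nat.prime_two hk (S := Sg.neighborSet ω \ {ω'})
    (Set.finite_of_ncard_ne_zero (by omega)).sdiff ?_ fun n => ⟨?_, ?_⟩
  · rw [Set.ncard_sdiff_singleton_of_mem (show ω' ∈ Sg.neighborSet ω from hadj)]
    omega
  · simpa [MulAction.mem_stabilizer_iff.mp (pow_mem hyω n)] using (hact (y ^ n) ω u).mpr hu
  · rw [Set.mem_singleton_iff, ← MulAction.mem_stabilizer_iff.mp (pow_mem hyω' n),
      smul_left_cancel_iff]
    exact huω'

theorem eq_top_of_stabilizer_le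
    (hact : ∀ (g : G) (a b : V), Sg.Adj (g • a) (g • b) ↔ Sg.Adj a b) (hconn : Sg.Connected)
    (harc : ∀ a b c d : V, Sg.Adj a b → Sg.Adj c d → ∃ g : G, g • a = c ∧ g • b = d)
    {ω ω' : V} (hadj : Sg.Adj ω ω') {H : Subgroup G} (hstab : MulAction.stabilizer G ω ≤ H)
    {g : G} (hg : g ∈ H) (hgω : g • ω = ω') : H = ⊤ := by
  have hstep : ∀ a b : V, Sg.Adj a b → (∃ h ∈ H, h • ω = a) → ∃ h ∈ H, h • ω = b := by
    rintro a b hab ⟨h, hh, rfl⟩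
    obtain ⟨c, hcω, hcω'⟩ := harc ω ω' ω (h⁻¹ • b) hadj
      (by rwa [← hact h, smul_inv_smul])
    exact ⟨h * c * g, mul_mem (mul_mem hh (hstab hcω)) hg,
      by rw [mul_smul, mul_smul, hgω, hcω', smul_inv_smul]⟩
  have horbit : ∀ v : V, ∃ h ∈ H, h • ω = v := by
    have hwalk : ∀ a b : V, Sg.Walk a b → (∃ h ∈ H, h • ω = a) → ∃ h ∈ H, h • ω = b := by
      intro a b p
      induction p with
      | nil => exact id
      | cons hab _ ih => exact fun ha => ih (hstep _ _ hab ha)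
    exact fun v => hwalk ω v (hconn.preconnected ω v).some ⟨1, H.one_mem, one_smul G ω⟩
  refine eq_top_iff.mpr fun z _ => ?_
  obtain ⟨h, hh, hhz⟩ := horbit (z • ω)
  have : h⁻¹ * z ∈ H :=
    hstab (by rw [MulAction.mem_stabilizer_iff, mul_smul, ← hhz, inv_smul_smul])
  simpa using mul_mem hh this

theorem closure_union_singleton_eq_top
    (hact : ∀ (g : G) (a b : V), Sg.Adj (g • a) (g • b) ↔ Sg.Adj a b) (hconn : Sg.Connected)
    (harc : ∀ a b c d : V, Sg.Adj a b → Sg.Adj c d → ∃ g : G, g • a = c ∧ g • b = d)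
    {ω ω' : V} (hadj : Sg.Adj ω ω') {g x y : G} (hgω : g • ω = ω')
    (hgen : MulAction.stabilizer G ω = Subgroup.closure ((pstab Sg G ω : Set G) ∪ {x, y}))
    (hw : g⁻¹ * y * g ∈ pstab Sg G ω) {L : Subgroup G} (hKL : pstab Sg G ω ≤ L)
    (hxy : x * y ∈ L) : Subgroup.closure ((L : Set G) ∪ {g}) = ⊤ := by
  set M := Subgroup.closure ((L : Set G) ∪ {g})
  have hLM : L ≤ M := le_closure_union_singleton
  have hgM : g ∈ M := Subgroup.subset_closure (.inr rfl)
  have hyM : y ∈ M := by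
    have := mul_mem (mul_mem hgM (hLM (hKL hw))) (inv_mem hgM)
    rwa [show g * (g⁻¹ * y * g) * g⁻¹ = y by group] at this
  have hxM : x ∈ M := by simpa using mul_mem (hLM hxy) (inv_mem hyM)
  refine eq_top_of_stabilizer_le hact hconn harc hadj ?_ hgM hgω
  rw [hgen, Subgroup.closure_le]
  exact Set.union_subset (fun k hk => hLM (hKL hk)) (Set.insert_subset hxM (by simpa using hyM))

end PointwiseStabilizer

section ClosurePstabUnion

variable {V G : Type*} [Group G] [MulAction G V] {Sg : SimpleGraph V} {ω ω' : V} {t : G}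

theorem closure_pstab_union_le_stabilizer (ht : t • ω = ω) :
    Subgroup.closure ((pstab Sg G ω : Set G) ∪ {t}) ≤ MulAction.stabilizer G ω :=
  (Subgroup.closure_le _).mpr (Set.union_subset (pstab_le_stabilizer ω) (by simpa using ht))

theorem mul_smul_eq_of_mem_pstab
    (hact : ∀ (g : G) (a b : V), Sg.Adj (g • a) (g • b) ↔ Sg.Adj a b)
    (hadj : Sg.Adj ω ω') (ht : t • ω = ω) {k : G}
    (hk : k ∈ pstab Sg G ω) : (k * t) • ω' = t • ω' := by
  rw [mul_smul]
  exact (mem_pstab_iff.mp hk).2 _ (by rwa [← ht, hact])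

theorem smul_eq_or_smul_eq_of_mem_closure_pstab_union
    (hact : ∀ (g : G) (a b : V), Sg.Adj (g • a) (g • b) ↔ Sg.Adj a b)
    (hadj : Sg.Adj ω ω') (ht : t • ω = ω)
    (ht2 : t ^ 2 ∈ pstab Sg G ω) {l : G}
    (hl : l ∈ Subgroup.closure ((pstab Sg G ω : Set G) ∪ {t})) :
    l • ω' = ω' ∨ l • ω' = t • ω' := by
  rcases (mem_closure_union_singleton_iff (mem_normalizer_pstab hact ht) ht2).mp hl with
    hk | ⟨k, hk, rfl⟩
  · exact .inl ((mem_pstab_iff.mp hk).2 ω' hadj)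
  · exact .inr (mul_smul_eq_of_mem_pstab hact hadj ht hk)

theorem mem_pstab_of_mem_closure_pstab_union
    (hact : ∀ (g : G) (a b : V), Sg.Adj (g • a) (g • b) ↔ Sg.Adj a b)
    (hadj : Sg.Adj ω ω') (ht : t • ω = ω)
    (ht2 : t ^ 2 ∈ pstab Sg G ω) (ht' : t • ω' ≠ ω') {l : G}
    (hl : l ∈ Subgroup.closure ((pstab Sg G ω : Set G) ∪ {t})) (hlω' : l • ω' = ω') :
    l ∈ pstab Sg G ω := by
  rcases (mem_closure_union_singleton_iff (mem_normalizer_pstab hact ht) ht2).mp hl with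
    hk | ⟨k, hk, rfl⟩
  · exact hk
  · exact absurd (mul_smul_eq_of_mem_pstab hact hadj ht hk ▸ hlω') ht'

theorem closure_pstab_union_inf_conjSG
    (hact : ∀ (g : G) (a b : V), Sg.Adj (g • a) (g • b) ↔ Sg.Adj a b)
    (hadj : Sg.Adj ω ω') (ht : t • ω = ω)
    (ht2 : t ^ 2 ∈ pstab Sg G ω) (ht' : t • ω' ≠ ω') {g : G} (hgω : g • ω = ω')
    (hgω' : g • ω' = ω) :
    Subgroup.closure ((pstab Sg G ω : Set G) ∪ {t}) ⊓
        conjSG (Subgroup.closure ((pstab Sg G ω : Set G) ∪ {t})) g =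
      pstab Sg G ω ⊓ pstab Sg G ω' := by
  set L := Subgroup.closure ((pstab Sg G ω : Set G) ∪ {t})
  have hLω : ∀ l ∈ L, l • ω = ω := fun l hl => closure_pstab_union_le_stabilizer ht hl
  apply le_antisymm
  · rintro u ⟨huL, hgu⟩
    replace hgu : g * u * g⁻¹ ∈ L := hgu
    have huω' : u • ω' = ω' := by
      have := hLω _ hgu
      rwa [mul_smul, mul_smul, ← hgω', inv_smul_smul, smul_left_cancel_iff] at this
    have hguω' : (g * u * g⁻¹) • ω' = ω' := by
      rw [mul_smul, mul_smul, ← hgω, inv_smul_smul, hLω u huL]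
    refine ⟨mem_pstab_of_mem_closure_pstab_union hact hadj ht ht2 ht' huL huω', ?_⟩
    show u ∈ pstab Sg G ω'
    rw [← conj_mem_pstab_smul_iff hact g, hgω']
    exact mem_pstab_of_mem_closure_pstab_union hact hadj ht ht2 ht' hgu hguω'
  · rintro u ⟨huω, huω'⟩
    refine ⟨le_closure_union_singleton huω, le_closure_union_singleton ?_⟩
    rw [← hgω']
    exact (conj_mem_pstab_smul_iff hact g u ω').mpr huω'

theorem relIndex_pstab_inf_pstab_eq_two
    (hact : ∀ (g : G) (a b : V), Sg.Adj (g • a) (g • b) ↔ Sg.Adj a b)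
    (hadj : Sg.Adj ω ω') {g : G}
    (hgω' : g • ω' = ω) {y : G} (hy' : y ∉ pstab Sg G ω)
    (hy2 : y ^ 2 ∈ pstab Sg G ω)
    (hker : pstab Sg G ω =
      Subgroup.closure (((pstab Sg G ω ⊓ pstab Sg G ω') : Set G) ∪ {g⁻¹ * y * g})) :
    (pstab Sg G ω ⊓ pstab Sg G ω').relIndex (pstab Sg G ω) = 2 := by
  set w := g⁻¹ * y * g with hw_def
  have hconj : ∀ z, g * z * g⁻¹ ∈ pstab Sg G ω ↔ z ∈ pstab Sg G ω' := fun z => by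
    rw [← conj_mem_pstab_smul_iff hact g z ω', hgω']
  have hgw : g * w * g⁻¹ = y := by rw [hw_def]; group
  have hw : w ∈ pstab Sg G ω := hker ▸ Subgroup.subset_closure (.inr rfl)
  have hwω : w • ω = ω := (mem_pstab_iff.mp hw).1
  have hwω' : w • ω' = ω' := (mem_pstab_iff.mp hw).2 ω' hadj
  have hwN : w ∈ Subgroup.normalizer ((pstab Sg G ω ⊓ pstab Sg G ω' : Subgroup G) : Set G) :=
    Subgroup.inf_normalizer_le_normalizer_inf
      ⟨mem_normalizer_pstab hact hwω, mem_normalizer_pstab hact hwω'⟩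
  have hw2 : w ^ 2 ∈ pstab Sg G ω ⊓ pstab Sg G ω' :=
    ⟨pow_mem hw 2, (hconj _).mp (by rwa [← conj_pow, hgw])⟩
  have hw' : w ∉ pstab Sg G ω ⊓ pstab Sg G ω' := fun h => hy' (hgw ▸ (hconj w).mpr h.2)
  convert relIndex_closure_union_singleton_eq_two hwN hw2 hw' using 2
  exact hker

end ClosurePstabUnion

theorem mul_inf_stabilizer_ne_stabilizer {V G : Type*} [Group G] [MulAction G V]
    {Sg : SimpleGraph V}
    (harc : ∀ a b c d : V, Sg.Adj a b → Sg.Adj c d → ∃ g : G, g • a = c ∧ g • b = d)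
    {ω ω' : V} (hadj : Sg.Adj ω ω') (hval : 2 < (Sg.neighborSet ω).ncard) {L : Subgroup G}
    {b : V} (hL : ∀ l ∈ L, l • ω' = ω' ∨ l • ω' = b) :
    (L : Set G) * ((MulAction.stabilizer G ω ⊓ MulAction.stabilizer G ω' : Subgroup G) : Set G)
      ≠ (MulAction.stabilizer G ω : Set G) := by
  obtain ⟨ν, hν, hνnot⟩ := Set.exists_mem_notMem_of_ncard_lt_ncard (t := Sg.neighborSet ω)
    ((Set.ncard_insert_le ω' {b}).trans_lt (by rwa [Set.ncard_singleton]))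
  intro hEq
  obtain ⟨a, haω, haν⟩ := harc ω ω' ω ν hadj hν
  have ha : a ∈ (MulAction.stabilizer G ω : Set G) := haω
  rw [← hEq] at ha
  obtain ⟨l, hl, s, hs, rfl⟩ := Set.mem_mul.mp ha
  rw [mul_smul, (show s • ω' = ω' from hs.2)] at haν
  rcases hL l hl with h | h <;> exact hνnot (by simp [← haν, h])

section CosetGraph

variable {G : Type*} [Group G] {H : Subgroup G} {g : G}

theorem cosetGraph_adj_smul (z : G) {a b : G ⧸ H} (h : (cosetGraph H g).Adj a b) :
    (cosetGraph H g).Adj (z • a) (z • b) := by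
  obtain ⟨hne, x, y, rfl, rfl, hxy⟩ := h
  refine ⟨fun he => hne (smul_left_cancel z he), z * x, z * y, rfl, rfl, ?_⟩
  simpa only [mul_inv_rev, mul_assoc, inv_mul_cancel_left] using hxy

theorem cosetGraph_reachable_smul (z : G) {a b : G ⧸ H} (h : (cosetGraph H g).Reachable a b) :
    (cosetGraph H g).Reachable (z • a) (z • b) :=
  h.map ⟨(z • ·), cosetGraph_adj_smul z⟩

theorem cosetGraph_adj_mk_mul (hg : g ∉ H) (z : G) {h : G} (hh : h ∈ H) :
    (cosetGraph H g).Adj z (z * h * g : G) := by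
  refine ⟨fun he => hg ?_, z, z * h * g, rfl, rfl, .inl ⟨h, hh, 1, H.one_mem, by group⟩⟩
  have := QuotientGroup.eq.mp he
  rwa [show z⁻¹ * (z * h * g) = h * g by group, H.mul_mem_cancel_left hh] at this

theorem cosetGraph_connected (hg : g ∉ H)
    (htop : Subgroup.closure ((H : Set G) ∪ {g}) = ⊤) : (cosetGraph H g).Connected := by
  refine (SimpleGraph.connected_iff_exists_forall_reachable _).mpr ⟨(1 : G), fun v => ?_⟩
  obtain ⟨z, rfl⟩ := QuotientGroup.mk_surjective v
  induction (htop ▸ Subgroup.mem_top z : z ∈ Subgroup.closure _) using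
    Subgroup.closure_induction with
  | mem a ha =>
    rcases ha with ha | rfl
    · rw [QuotientGroup.eq.mpr (by simpa using ha)]
    · simpa using (cosetGraph_adj_mk_mul hg 1 H.one_mem).reachable
  | one => rfl
  | mul a b _ _ ha hb => exact ha.trans (by simpa using cosetGraph_reachable_smul a hb)
  | inv a _ ha => simpa using (cosetGraph_reachable_smul a⁻¹ ha).symm

theorem cosetGraph_neighborSet_mk (hg : g ∉ H) (hg2 : g ^ 2 ∈ H) (z : G) :
    (cosetGraph H g).neighborSet z = Set.range fun h : H => ((z * h * g : G) : G ⧸ H) := by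
  ext b
  refine ⟨?_, ?_⟩
  · rintro ⟨-, x, y, hx, rfl, hxy⟩
    obtain ⟨l, hl, rfl⟩ : ∃ l ∈ H, x = z * l :=
      ⟨z⁻¹ * x, QuotientGroup.eq.mp hx.symm, by group⟩
    rcases hxy with ⟨h, hh, h', hh', he⟩ | ⟨h, hh, h', hh', he⟩
    · refine ⟨⟨l * h, mul_mem hl hh⟩, QuotientGroup.eq.mpr ?_⟩
      rw [show y = z * l * (h * g * h') by rw [← he]; group]
      convert hh' using 1
      group
    · -- `(HgH)⁻¹ = HgH` because `g⁻¹ = g⁻² g`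
      refine ⟨⟨l * h'⁻¹ * (g ^ 2)⁻¹, mul_mem (mul_mem hl (inv_mem hh')) (inv_mem hg2)⟩,
        QuotientGroup.eq.mpr ?_⟩
      rw [show y = z * l * (h * g * h')⁻¹ by rw [← he]; group]
      convert inv_mem hh using 1
      group
  · rintro ⟨⟨h, hh⟩, rfl⟩
    exact cosetGraph_adj_mk_mul hg z hh

theorem ncard_neighborSet_cosetGraph (hg : g ∉ H) (hg2 : g ^ 2 ∈ H) (v : G ⧸ H) :
    ((cosetGraph H g).neighborSet v).ncard = (conjSG H g).relIndex H := by
  obtain ⟨z, rfl⟩ := QuotientGroup.mk_surjective v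
  rw [cosetGraph_neighborSet_mk hg hg2, ← Nat.card_coe_set_eq,
    ← Nat.card_congr (Setoid.quotientKerEquivRange _), Subgroup.relIndex, Subgroup.index]
  refine Nat.card_congr (Quotient.congrRight fun a b => ?_)
  rw [Setoid.ker_def, QuotientGroup.eq, QuotientGroup.leftRel_apply, Subgroup.mem_subgroupOf]
  show _ ↔ g * ((a : G)⁻¹ * b) * g⁻¹ ∈ H
  rw [show (z * a * g)⁻¹ * (z * b * g) = g⁻¹ * ((a : G)⁻¹ * b) * g by group,
    show g * ((a : G)⁻¹ * b) * g⁻¹ = g ^ 2 * (g⁻¹ * ((a : G)⁻¹ * b) * g) * (g ^ 2)⁻¹ by group,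
    H.mul_mem_cancel_right (inv_mem hg2), H.mul_mem_cancel_left hg2]

end CosetGraph

theorem tetravalent_pseudocover_construction_general {V : Type*} (Sg : SimpleGraph V)
    {G : Type*} [Group G] [MulAction G V]
    (hact : ∀ (g : G) (a b : V), Sg.Adj (g • a) (g • b) ↔ Sg.Adj a b)
    (hconn : Sg.Connected)
    (hval : ∀ v : V, (Sg.neighborSet v).ncard = 4)
    (harc : ∀ a b c d : V, Sg.Adj a b → Sg.Adj c d → ∃ g : G, g • a = c ∧ g • b = d)
    (ω ω' : V) (hadj : Sg.Adj ω ω')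
    (h2 : IsPGroup 2 (MulAction.stabilizer G ω))
    (g : G) (hgω : g • ω = ω') (hgω' : g • ω' = ω) (hg2 : g ^ 2 ∈ pstab Sg G ω)
    (x y : G)
    (hx : x ∈ MulAction.stabilizer G ω)
    (hx' : x ∉ MulAction.stabilizer G ω ⊓ MulAction.stabilizer G ω')
    (hy : y ∈ pstab Sg G ω') (hy' : y ∉ pstab Sg G ω)
    (hgen : MulAction.stabilizer G ω = Subgroup.closure ((pstab Sg G ω : Set G) ∪ {x, y}))
    (hker : pstab Sg G ω =
      Subgroup.closure (((pstab Sg G ω ⊓ pstab Sg G ω') : Set G) ∪ {g⁻¹ * y * g}))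
    (hxy : (x * y) ^ 2 ∈ pstab Sg G ω)
    (L : Subgroup G) (hL : L = Subgroup.closure ((pstab Sg G ω : Set G) ∪ {x * y})) :
    Subgroup.closure ((L : Set G) ∪ {g}) = ⊤ ∧
    (L ⊓ conjSG L g = pstab Sg G ω ⊓ pstab Sg G ω' ∧ (conjSG L g).relIndex L = 4) ∧
    (L : Set G) * ((MulAction.stabilizer G ω ⊓ MulAction.stabilizer G ω' : Subgroup G) : Set G)
      ≠ (MulAction.stabilizer G ω : Set G) ∧
    (cosetGraph L g).Connected ∧
    (∀ v : G ⧸ L, ((cosetGraph L g).neighborSet v).ncard = 4) := by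
  have hyω' : y • ω' = ω' := (mem_pstab_iff.mp hy).1
  have hyω : y • ω = ω := (mem_pstab_iff.mp hy).2 ω hadj.symm
  have hxyω : (x * y) • ω = ω := by rw [mul_smul, hyω, MulAction.mem_stabilizer_iff.mp hx]
  have hxyω' : (x * y) • ω' ≠ ω' := by
    rw [mul_smul, hyω']
    exact fun h => hx' ⟨hx, h⟩
  have hy2 : y ^ 2 ∈ pstab Sg G ω := by
    obtain ⟨k, hk⟩ := h2 ⟨y, hyω⟩
    exact sq_mem_pstab_of_mem_pstab_adj hact (hval ω) hadj hy (k := k)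
      (by simpa using congrArg Subtype.val hk)
  have hKL : pstab Sg G ω ≤ L := hL ▸ le_closure_union_singleton
  have hLK : (pstab Sg G ω).relIndex L = 2 := hL ▸ relIndex_closure_union_singleton_eq_two
    (mem_normalizer_pstab hact hxyω) hxy fun h => hxyω' ((mem_pstab_iff.mp h).2 ω' hadj)
  have hLg : L ⊓ conjSG L g = pstab Sg G ω ⊓ pstab Sg G ω' :=
    hL ▸ closure_pstab_union_inf_conjSG hact hadj hxyω hxy hxyω' hgω hgω'
  have hindex : (conjSG L g).relIndex L = 4 := by
    rw [← Subgroup.inf_relIndex_right, inf_comm, hLg,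
      ← Subgroup.relIndex_mul_relIndex _ _ _ inf_le_left hKL,
      relIndex_pstab_inf_pstab_eq_two hact hadj hgω' hy' hy2 hker, hLK]
  have hLω : L ≤ MulAction.stabilizer G ω := hL ▸ closure_pstab_union_le_stabilizer hxyω
  have hgL : g ∉ L := fun h => hadj.ne' (hgω.symm.trans (hLω h))
  have htop : Subgroup.closure ((L : Set G) ∪ {g}) = ⊤ :=
    closure_union_singleton_eq_top hact hconn harc hadj hgω hgen
      (hker ▸ Subgroup.subset_closure (.inr rfl)) hKL (hL ▸ Subgroup.subset_closure (.inr rfl))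
  refine ⟨htop, ⟨hLg, hindex⟩, ?_, cosetGraph_connected hgL htop,
    fun v => by rw [ncard_neighborSet_cosetGraph hgL (hKL hg2), hindex]⟩
  exact mul_inf_stabilizer_ne_stabilizer harc hadj (by rw [hval]; norm_num) fun l hl =>
    smul_eq_or_smul_eq_of_mem_closure_pstab_union hact hadj hxyω hxy (hL ▸ hl)

/-- **Lemma 6.5 (Construction 6.4 produces pseudocovers).**
With `Sg` a finite connected tetravalent graph, `G ≤ Aut Sg` arc-transitive, `(ω, ω')`
an arc, `G_ω` a `2`-group of order at least `16`, `g` interchanging `ω, ω'` with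
`g² ∈ G_ω^{[1]}`, and `x, y` as in Lemma 6.3, set `L = ⟨G_ω^{[1]}, xy⟩`.  Then:
(i) `⟨L, g⟩ = G`;
(ii) `L ∩ L^g = G_ω^{[1]} ∩ G_{ω'}^{[1]}` and `|L : L ∩ L^g| = 4`;
(iii) `L · G_{ωω'} ≠ G_ω` (i.e. `L` is intransitive on `Sg(ω)`).
Consequently the coset graph `Cos(G, L, LgL)` is a connected tetravalent `G`-symmetric
graph; by the criterion of Theorem 1.2, (i)–(iii) say exactly that it is a
pseudocover of `Sg`. -/
theorem tetravalent_pseudocover_construction {V : Type*} [Fintype V] (Sg : SimpleGraph V)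
    {G : Type*} [Group G] [MulAction G V] [FaithfulSMul G V]
    (hact : ∀ (g : G) (a b : V), Sg.Adj (g • a) (g • b) ↔ Sg.Adj a b)
    (hconn : Sg.Connected)
    (hval : ∀ v : V, (Sg.neighborSet v).ncard = 4)
    (harc : ∀ a b c d : V, Sg.Adj a b → Sg.Adj c d → ∃ g : G, g • a = c ∧ g • b = d)
    (ω ω' : V) (hadj : Sg.Adj ω ω')
    (h2 : IsPGroup 2 (MulAction.stabilizer G ω))
    (hbig : 16 ≤ Nat.card (MulAction.stabilizer G ω))
    (g : G) (hgω : g • ω = ω') (hgω' : g • ω' = ω) (hg2 : g ^ 2 ∈ pstab Sg G ω)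
    (x y : G)
    (hx : x ∈ MulAction.stabilizer G ω)
    (hx' : x ∉ MulAction.stabilizer G ω ⊓ MulAction.stabilizer G ω')
    (hy : y ∈ pstab Sg G ω') (hy' : y ∉ pstab Sg G ω)
    (hgen : MulAction.stabilizer G ω = Subgroup.closure ((pstab Sg G ω : Set G) ∪ {x, y}))
    (hker : pstab Sg G ω =
      Subgroup.closure (((pstab Sg G ω ⊓ pstab Sg G ω') : Set G) ∪ {g⁻¹ * y * g}))
    (hxy : (x * y) ^ 2 ∈ pstab Sg G ω)
    (L : Subgroup G) (hL : L = Subgroup.closure ((pstab Sg G ω : Set G) ∪ {x * y})) :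
    Subgroup.closure ((L : Set G) ∪ {g}) = ⊤ ∧
    (L ⊓ conjSG L g = pstab Sg G ω ⊓ pstab Sg G ω' ∧ (conjSG L g).relIndex L = 4) ∧
    (L : Set G) * ((MulAction.stabilizer G ω ⊓ MulAction.stabilizer G ω' : Subgroup G) : Set G)
      ≠ (MulAction.stabilizer G ω : Set G) ∧
    (cosetGraph L g).Connected ∧
    (∀ v : G ⧸ L, ((cosetGraph L g).neighborSet v).ncard = 4) :=
  tetravalent_pseudocover_construction_general Sg hact hconn hval harc ω ω' hadj h2 g hgω hgω' hg2 x
    y hx hx' hy hy' hgen hker hxy L hL
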